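/- arXiv:math/0303238 — 2 statements merged into one kernel-verified Lean document; each statement's English description precedes it below -/
import Mathlib

section
/- Let n ≥ 2 and let Γ be a finite index subgroup of SL_n(ℤ). Let F : ℝⁿ → ℝⁿ be a bijection such that F and F⁻¹ are C¹, and such that F(x+m) − F(x) ∈ ℤⁿ for all x ∈ ℝⁿ and m ∈ ℤⁿ. Suppose the induced map of the torus ℝⁿ/ℤⁿ maps Γ-orbits onto Γ-orbits, i.e., for all x, y ∈ ℝⁿ one has (∃ γ ∈ Γ, ∃ m ∈ ℤⁿ, y = γx + m) if and only if (∃ γ ∈ Γ, ∃ m ∈ ℤⁿ, F(y) = γF(x) + m). Then F is affine: there exist A ∈ GL_n(ℤ) with AΓA⁻¹ = Γ and c ∈ ℝⁿ such that F(x) = Ax + c for all x ∈ ℝⁿ. -/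
/-- The linear action of an integer matrix on `ℝⁿ`. -/
def intMatAct {n : ℕ} (γ : Matrix (Fin n) (Fin n) ℤ) (x : Fin n → ℝ) : Fin n → ℝ :=
  (γ.map (Int.cast : ℤ → ℝ)).mulVec x

/-!
The lattice condition gives `F (x + m) = F x + B m` for an integer matrix `B` (the difference is a
continuous integer-valued function of `x`), so `G = F - B` is `ℤⁿ`-periodic, hence bounded, and
`B` is nonsingular because `F` is injective. For `γ ∈ Γ` the `C¹` map `F ∘ γ ∘ F⁻¹` is covered by
the countably many closed sets on which it agrees with some `y ↦ β y + m`, `β ∈ Γ`; by Baire its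
derivative is an integer matrix on a dense set, hence constant, so `F ∘ γ = β ∘ F + c` and
`B γ = β B`. Finite index puts the powers `γₖ` of a transvection `1 + t Eᵢⱼ` into `Γ`, and then
`βₖ (G x - G 0) = B γₖ B⁻¹ (G x - G 0)` stays bounded although it grows linearly in `k` unless the
`j`-th coordinate of `B⁻¹ (G x - G 0)` vanishes. As `n ≥ 2`, this holds for every `j`, so `F` is
affine. The orbit of `0` is `ℤⁿ`, which makes `B` unimodular, and the same argument for `F⁻¹`
gives `B Γ B⁻¹ = Γ`.
-/

open Matrix Topology

section

variable {n : ℕ}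

def castVec (m : Fin n → ℤ) : Fin n → ℝ := fun i => (m i : ℝ)

@[simp] lemma castVec_apply (m : Fin n → ℤ) (i : Fin n) : castVec m i = m i := rfl

@[simp] lemma castVec_zero : castVec (0 : Fin n → ℤ) = 0 := by ext; simp

lemma castVec_add (a b : Fin n → ℤ) : castVec (a + b) = castVec a + castVec b := by
  ext; simp

lemma castVec_injective : Function.Injective (castVec (n := n)) :=
  fun _ _ h => funext fun i => Int.cast_injective (congrFun h i)

lemma intMatAct_eq_mapMatrix (γ : Matrix (Fin n) (Fin n) ℤ) (x : Fin n → ℝ) :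
    intMatAct γ x = (Int.castRingHom ℝ).mapMatrix γ *ᵥ x := rfl

lemma intMatAct_add (γ : Matrix (Fin n) (Fin n) ℤ) (x y : Fin n → ℝ) :
    intMatAct γ (x + y) = intMatAct γ x + intMatAct γ y := mulVec_add _ _ _

lemma intMatAct_sub (γ : Matrix (Fin n) (Fin n) ℤ) (x y : Fin n → ℝ) :
    intMatAct γ (x - y) = intMatAct γ x - intMatAct γ y := mulVec_sub _ _ _

lemma intMatAct_smul (γ : Matrix (Fin n) (Fin n) ℤ) (r : ℝ) (x : Fin n → ℝ) :
    intMatAct γ (r • x) = r • intMatAct γ x := mulVec_smul _ _ _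

@[simp] lemma intMatAct_zero (γ : Matrix (Fin n) (Fin n) ℤ) : intMatAct γ 0 = 0 := mulVec_zero _

@[simp] lemma intMatAct_one (x : Fin n → ℝ) : intMatAct 1 x = x := by
  simp [intMatAct, Matrix.map_one]

lemma intMatAct_mul (γ δ : Matrix (Fin n) (Fin n) ℤ) (x : Fin n → ℝ) :
    intMatAct (γ * δ) x = intMatAct γ (intMatAct δ x) := by
  simp only [intMatAct_eq_mapMatrix, map_mul, mulVec_mulVec]

lemma intMatAct_castVec (γ : Matrix (Fin n) (Fin n) ℤ) (m : Fin n → ℤ) :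
    intMatAct γ (castVec m) = castVec (γ *ᵥ m) := by
  ext i
  simp [intMatAct, castVec, mulVec, dotProduct]

lemma intMatAct_transvection (i j : Fin n) (c : ℤ) (w : Fin n → ℝ) :
    intMatAct (transvection i j c) w = w + ((c : ℝ) * w j) • Pi.single i 1 := by
  rw [intMatAct_eq_mapMatrix, transvection, map_add, map_one, add_mulVec, one_mulVec,
    RingHom.mapMatrix_apply, map_single, single_mulVec_eq, eq_intCast]

noncomputable def intMatCLM (γ : Matrix (Fin n) (Fin n) ℤ) : (Fin n → ℝ) →L[ℝ] (Fin n → ℝ) :=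
  LinearMap.toContinuousLinearMap (toLin' (γ.map (Int.cast : ℤ → ℝ)))

@[simp] lemma coe_intMatCLM (γ : Matrix (Fin n) (Fin n) ℤ) : ⇑(intMatCLM γ) = intMatAct γ := rfl

lemma intMatCLM_single_apply (γ : Matrix (Fin n) (Fin n) ℤ) (a b : Fin n) :
    intMatCLM γ (Pi.single b 1) a = γ a b := by
  simp [intMatAct, mulVec_single]

theorem Continuous.eq_of_dense_of_mem_range_intCast {X : Type*} [TopologicalSpace X]
    [PreconnectedSpace X] {f : X → ℝ} (hf : Continuous f) {s : Set X} (hs : Dense s)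
    (hint : ∀ x ∈ s, f x ∈ Set.range ((↑) : ℤ → ℝ)) (x y : X) : f x = f y := by
  have hclosed : IsClosed (f ⁻¹' Set.range ((↑) : ℤ → ℝ)) :=
    Int.isClosedEmbedding_coe_real.isClosed_range.preimage hf
  have hall : ∀ x, f x ∈ Set.range ((↑) : ℤ → ℝ) := fun x =>
    hclosed.closure_subset_iff.2 hint (hs.closure_eq ▸ Set.mem_univ x)
  choose g hg using hall
  have hgc : Continuous g := by
    rw [Int.isClosedEmbedding_coe_real.isEmbedding.continuous_iff]
    simpa only [Function.comp_def, hg] using hf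
  rw [← hg x, ← hg y, PreconnectedSpace.constant inferInstance hgc]

theorem exists_intMatrix_of_periodic {F : (Fin n → ℝ) → (Fin n → ℝ)} (hF : Continuous F)
    (hper : ∀ x m, ∃ k, F (x + castVec m) = F x + castVec k) :
    ∃ B : Matrix (Fin n) (Fin n) ℤ, ∀ x m, F (x + castVec m) = F x + castVec (B *ᵥ m) := by
  have hconst : ∀ m x, F (x + castVec m) - F x = F (0 + castVec m) - F 0 := by
    intro m x
    ext i
    refine Continuous.eq_of_dense_of_mem_range_intCast (s := Set.univ)
      ((continuous_apply i).comp ((hF.comp (continuous_add_const _)).sub hF)) dense_univ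
      (fun y _ => ?_) x 0
    obtain ⟨k, hk⟩ := hper y m
    exact ⟨k i, by simp [hk]⟩
  choose ψ hψ using fun m => hper 0 m
  have hψ' : ∀ x m, F (x + castVec m) = F x + castVec (ψ m) := fun x m => by
    rw [← sub_eq_iff_eq_add', hconst, hψ, add_sub_cancel_left]
  have hadd : ∀ a b, ψ (a + b) = ψ a + ψ b := fun a b => castVec_injective <| by
    have h := hψ' 0 (a + b)
    rw [castVec_add, ← add_assoc, hψ', hψ', add_assoc] at h
    rw [castVec_add, add_left_cancel h]
  refine ⟨LinearMap.toMatrix' (AddMonoidHom.mk' ψ hadd).toIntLinearMap, fun x m => ?_⟩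
  rw [LinearMap.toMatrix'_mulVec, hψ']
  rfl

theorem exists_bound_of_periodic {G : (Fin n → ℝ) → (Fin n → ℝ)} (hG : Continuous G)
    (hper : ∀ x m, G (x + castVec m) = G x) : ∃ C, ∀ x, ‖G x‖ ≤ C := by
  obtain ⟨C, hC⟩ := (isCompact_Icc (a := (0 : Fin n → ℝ)) (b := 1)).exists_bound_of_continuousOn
    hG.continuousOn
  refine ⟨C, fun x => ?_⟩
  have hx : x = (fun i => Int.fract (x i)) + castVec (fun i => ⌊x i⌋) := by
    ext i
    simp [Int.fract_add_floor]
  rw [hx, hper]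
  exact hC _ ⟨fun i => Int.fract_nonneg _, fun i => (Int.fract_lt_one _).le⟩

theorem det_ne_zero_of_injective_of_periodic {F : (Fin n → ℝ) → (Fin n → ℝ)}
    (hF : Function.Injective F) {B : Matrix (Fin n) (Fin n) ℤ}
    (hB : ∀ x m, F (x + castVec m) = F x + castVec (B *ᵥ m)) : B.det ≠ 0 := by
  rintro hdet
  obtain ⟨m, hm0, hm⟩ := exists_mulVec_eq_zero_iff.2 hdet
  have : F (0 + castVec m) = F 0 := by rw [hB, hm, castVec_zero, add_zero]
  exact hm0 (castVec_injective (by simpa using hF this))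

theorem mul_eq_mul_of_periodic {F : (Fin n → ℝ) → (Fin n → ℝ)} {B γ β : Matrix (Fin n) (Fin n) ℤ}
    (hB : ∀ x m, F (x + castVec m) = F x + castVec (B *ᵥ m)) {c : Fin n → ℝ}
    (hconj : ∀ x, F (intMatAct γ x) = intMatAct β (F x) + c) : B * γ = β * B := by
  refine ext_of_mulVec_single fun b => castVec_injective ?_
  have h := hconj (0 + castVec (Pi.single b 1))
  rw [intMatAct_add, intMatAct_castVec, hB, hB, intMatAct_add, intMatAct_castVec, add_right_comm,
    ← hconj, intMatAct_zero, add_right_inj] at h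
  rwa [← mulVec_mulVec, ← mulVec_mulVec]

theorem ContDiff.fderiv_eq_of_dense_eq_intMatCLM {h : (Fin n → ℝ) → (Fin n → ℝ)}
    (hh : ContDiff ℝ 1 h) {s : Set (Fin n → ℝ)} (hs : Dense s)
    (hint : ∀ y ∈ s, ∃ A : Matrix (Fin n) (Fin n) ℤ, fderiv ℝ h y = intMatCLM A)
    (y y' : Fin n → ℝ) : fderiv ℝ h y = fderiv ℝ h y' := by
  have hentry : ∀ a b : Fin n, fderiv ℝ h y (Pi.single b 1) a = fderiv ℝ h y' (Pi.single b 1) a :=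
    fun a b => Continuous.eq_of_dense_of_mem_range_intCast
      ((continuous_apply a).comp ((hh.continuous_fderiv one_ne_zero).clm_apply continuous_const))
      hs (fun z hz => by
        obtain ⟨A, hA⟩ := hint z hz
        exact ⟨A a b, by simp [hA, intMatCLM_single_apply]⟩) y y'
  refine ContinuousLinearMap.coe_injective ((Pi.basisFun ℝ (Fin n)).ext fun b => ?_)
  ext a
  simpa using hentry a b

theorem ContDiff.exists_eq_intMatAct_add_of_cover {ι : Type*} [Countable ι]
    {h : (Fin n → ℝ) → (Fin n → ℝ)} (hh : ContDiff ℝ 1 h) (M : ι → Matrix (Fin n) (Fin n) ℤ)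
    (c : ι → Fin n → ℝ) (hcover : ∀ y, ∃ i, h y = intMatAct (M i) y + c i) :
    ∃ i, ∃ c', ∀ y, h y = intMatAct (M i) y + c' := by
  set S : ι → Set (Fin n → ℝ) := fun i => {y | h y = intMatAct (M i) y + c i}
  have hS : ∀ i, IsClosed (S i) := fun i =>
    isClosed_eq hh.continuous ((intMatCLM (M i)).continuous.add continuous_const)
  have hdense : Dense (⋃ i, interior (S i)) := dense_iUnion_interior_of_closed hS
    (Set.eq_univ_of_forall fun y => Set.mem_iUnion.2 (hcover y))
  have hderiv : ∀ i, ∀ y ∈ interior (S i), fderiv ℝ h y = intMatCLM (M i) := fun i y hy => by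
    have heq : h =ᶠ[𝓝 y] fun z => intMatCLM (M i) z + c i := mem_interior_iff_mem_nhds.1 hy
    rw [heq.fderiv_eq, fderiv_add_const, ContinuousLinearMap.fderiv]
  have hfderiv_const := hh.fderiv_eq_of_dense_eq_intMatCLM hdense fun z hz => by
    obtain ⟨j, hj⟩ := Set.mem_iUnion.1 hz
    exact ⟨M j, hderiv j z hj⟩
  obtain ⟨y₀, hy₀⟩ := hdense.nonempty
  obtain ⟨i, hi⟩ := Set.mem_iUnion.1 hy₀
  have hdiff : Differentiable ℝ h := hh.differentiable one_ne_zero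
  have hconst := is_const_of_fderiv_eq_zero (hdiff.sub (intMatCLM (M i)).differentiable)
    fun y => by
      rw [fderiv_sub (hdiff y) (intMatCLM (M i)).differentiableAt, ContinuousLinearMap.fderiv,
        hfderiv_const y y₀, hderiv i y₀ hi, sub_self]
  refine ⟨i, h 0, fun y => ?_⟩
  simpa [sub_eq_iff_eq_add'] using hconst y 0

theorem exists_conj_of_mapsTo_orbits (Γ : Subgroup (SpecialLinearGroup (Fin n) ℤ))
    (F : (Fin n → ℝ) ≃ (Fin n → ℝ)) (hF : ContDiff ℝ 1 F) (hFsymm : ContDiff ℝ 1 F.symm)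
    (horb : ∀ x, ∀ γ ∈ Γ, ∃ β ∈ Γ, ∃ m,
      F (intMatAct (γ : Matrix (Fin n) (Fin n) ℤ) x) = intMatAct β (F x) + castVec m)
    {γ : SpecialLinearGroup (Fin n) ℤ} (hγ : γ ∈ Γ) :
    ∃ β ∈ Γ, ∃ c, ∀ x, F (intMatAct (γ : Matrix (Fin n) (Fin n) ℤ) x) = intMatAct β (F x) + c := by
  have : Countable (Matrix (Fin n) (Fin n) ℤ) := inferInstanceAs (Countable (Fin n → Fin n → ℤ))
  have : Countable (SpecialLinearGroup (Fin n) ℤ) := Subtype.countable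
  have hh : ContDiff ℝ 1 (F ∘ intMatAct γ ∘ F.symm) :=
    hF.comp ((intMatCLM (γ : Matrix (Fin n) (Fin n) ℤ)).contDiff.comp hFsymm)
  obtain ⟨⟨β, _⟩, c, hc⟩ := hh.exists_eq_intMatAct_add_of_cover
    (fun p : Γ × (Fin n → ℤ) => ((p.1 : SpecialLinearGroup (Fin n) ℤ) : Matrix (Fin n) (Fin n) ℤ))
    (fun p => castVec p.2) fun y => by
      obtain ⟨β, hβ, m, hm⟩ := horb (F.symm y) γ hγ
      exact ⟨⟨⟨β, hβ⟩, m⟩, by simpa using hm⟩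
  exact ⟨β, β.2, c, fun x => by simpa using hc (F x)⟩

lemma Matrix.SpecialLinearGroup.transvection_pow {ι R : Type*} [DecidableEq ι] [Fintype ι]
    [CommRing R] {i j : ι} (hij : i ≠ j) (b : R) (k : ℕ) :
    transvection hij b ^ k = transvection hij (k * b) := by
  induction k with
  | zero => simp
  | succ k ih => rw [pow_succ, ih, ← transvection_add, Nat.cast_succ, add_one_mul]

theorem Subgroup.FiniteIndex.exists_transvection_mem {ι R : Type*} [DecidableEq ι] [Fintype ι]
    [CommRing R] {Γ : Subgroup (SpecialLinearGroup ι R)} (hΓ : Γ.FiniteIndex) {i j : ι}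
    (hij : i ≠ j) :
    ∃ t : ℕ, 0 < t ∧ ∀ k : ℕ, SpecialLinearGroup.transvection hij ((t * k : ℕ) : R) ∈ Γ := by
  obtain ⟨t, ht, -, hmem⟩ :=
    Γ.exists_pow_mem_of_index_ne_zero hΓ.index_ne_zero (SpecialLinearGroup.transvection hij 1)
  refine ⟨t, ht, fun k => ?_⟩
  have := Γ.pow_mem hmem k
  rwa [← pow_mul, SpecialLinearGroup.transvection_pow, mul_one] at this

theorem eq_zero_of_forall_norm_add_smul_le {E : Type*} [NormedAddCommGroup E] [NormedSpace ℝ E]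
    {u v : E} {C : ℝ} (h : ∀ k : ℕ, ‖v + (k : ℝ) • u‖ ≤ C) : u = 0 := by
  by_contra hu
  have hpos : 0 < ‖u‖ := norm_pos_iff.2 hu
  obtain ⟨k, hk⟩ := exists_nat_gt ((C + ‖v‖) / ‖u‖)
  have hle : (k : ℝ) * ‖u‖ ≤ C + ‖v‖ := calc
    (k : ℝ) * ‖u‖ = ‖(v + (k : ℝ) • u) - v‖ := by simp [norm_smul]
    _ ≤ ‖v + (k : ℝ) • u‖ + ‖v‖ := norm_sub_le _ _
    _ ≤ C + ‖v‖ := by linarith [h k]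
  rw [div_lt_iff₀ hpos] at hk
  linarith

lemma isUnit_mapMatrix_intCast {B : Matrix (Fin n) (Fin n) ℤ} (hB : B.det ≠ 0) :
    IsUnit ((Int.castRingHom ℝ).mapMatrix B) := by
  rw [isUnit_iff_isUnit_det, ← RingHom.map_det, isUnit_iff_ne_zero]
  simpa using hB

theorem apply_eq_zero_of_forall_norm_intMatAct_transvection_le {B : Matrix (Fin n) (Fin n) ℤ}
    (hB : B.det ≠ 0) (i j : Fin n) {t : ℕ} (ht : 0 < t) {w : Fin n → ℝ} {C : ℝ}
    (h : ∀ k : ℕ, ‖intMatAct B (intMatAct (transvection i j ((t * k : ℕ) : ℤ)) w)‖ ≤ C) :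
    w j = 0 := by
  have hinj : Function.Injective (intMatAct B) :=
    mulVec_injective_iff_isUnit.2 (isUnit_mapMatrix_intCast hB)
  have hexpand : ∀ k : ℕ, intMatAct B w + (k : ℝ) • intMatAct B ((t * w j) • Pi.single i 1) =
      intMatAct B (intMatAct (transvection i j ((t * k : ℕ) : ℤ)) w) := fun k => by
    rw [intMatAct_transvection, intMatAct_add, intMatAct_smul, intMatAct_smul, smul_smul]
    push_cast
    ring_nf
  have hu := eq_zero_of_forall_norm_add_smul_le fun k => (congrArg norm (hexpand k)).trans_le (h k)
  rw [← intMatAct_zero B] at hu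
  have := congrFun (hinj hu) i
  simpa [ht.ne'] using this

theorem eq_intMatAct_add_of_conj {Γ : Subgroup (SpecialLinearGroup (Fin n) ℤ)} (hn : 2 ≤ n)
    (hΓ : Γ.FiniteIndex) {F : (Fin n → ℝ) → (Fin n → ℝ)} (hF : Continuous F)
    (hFinj : Function.Injective F) {B : Matrix (Fin n) (Fin n) ℤ}
    (hB : ∀ x m, F (x + castVec m) = F x + castVec (B *ᵥ m))
    (hconj : ∀ γ ∈ Γ, ∃ β : Matrix (Fin n) (Fin n) ℤ, ∃ c,
      ∀ x, F (intMatAct (γ : Matrix (Fin n) (Fin n) ℤ) x) = intMatAct β (F x) + c)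
    (x : Fin n → ℝ) : F x = intMatAct B x + F 0 := by
  set G : (Fin n → ℝ) → (Fin n → ℝ) := fun x => F x - intMatAct B x
  obtain ⟨C, hC⟩ := exists_bound_of_periodic (G := G) (hF.sub (intMatCLM B).continuous)
    fun x m => by simp only [G, hB, intMatAct_add, intMatAct_castVec]; abel
  have hbound : ∀ γ ∈ Γ, ∀ w, intMatAct B w = G x - G 0 →
      ‖intMatAct B (intMatAct (γ : Matrix (Fin n) (Fin n) ℤ) w)‖ ≤ 2 * C := by
    intro γ hγ w hw
    obtain ⟨β, c, hβ⟩ := hconj γ hγ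
    have hcomm := mul_eq_mul_of_periodic hB hβ
    have hGβ : ∀ y, G (intMatAct γ y) = intMatAct β (G y) + c := fun y => by
      simp only [G]
      rw [hβ, ← intMatAct_mul, hcomm, intMatAct_mul, intMatAct_sub]
      abel
    calc ‖intMatAct B (intMatAct γ w)‖ = ‖G (intMatAct γ x) - G (intMatAct γ 0)‖ := by
          rw [← intMatAct_mul, hcomm, intMatAct_mul, hw, intMatAct_sub, hGβ, hGβ,
            add_sub_add_right_eq_sub]
      _ ≤ ‖G (intMatAct γ x)‖ + ‖G (intMatAct γ 0)‖ := norm_sub_le _ _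
      _ ≤ 2 * C := by linarith [hC (intMatAct γ x), hC (intMatAct γ 0)]
  have hdet := det_ne_zero_of_injective_of_periodic hFinj hB
  obtain ⟨w, hw⟩ := mulVec_surjective_iff_isUnit.2 (isUnit_mapMatrix_intCast hdet) (G x - G 0)
  have : Nontrivial (Fin n) := Fin.nontrivial_iff_two_le.2 hn
  have hw0 : w = 0 := funext fun j => by
    obtain ⟨i, hij⟩ := exists_ne j
    obtain ⟨t, ht, hmem⟩ := hΓ.exists_transvection_mem hij
    exact apply_eq_zero_of_forall_norm_intMatAct_transvection_le hdet i j ht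
      fun k => hbound _ (hmem k) w hw
  have hG : G x = G 0 := by rw [← sub_eq_zero, ← hw, hw0, mulVec_zero]
  simpa [G, sub_eq_iff_eq_add'] using hG

theorem isUnit_of_eq_intMatAct_add {F : (Fin n → ℝ) → (Fin n → ℝ)} (hF : Function.Surjective F)
    {B : Matrix (Fin n) (Fin n) ℤ} {c : Fin n → ℝ} (hFB : ∀ x, F x = intMatAct B x + c)
    (hint : ∀ y m, F y = c + castVec m → ∃ m', y = castVec m') : IsUnit B := by
  refine mulVec_surjective_iff_isUnit.1 fun m => ?_
  obtain ⟨y, hy⟩ := hF (c + castVec m)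
  obtain ⟨m', rfl⟩ := hint y m hy
  refine ⟨m', castVec_injective ?_⟩
  rwa [hFB, add_comm, add_right_inj, intMatAct_castVec] at hy

theorem conj_mem_iff_of_periodic {Γ : Subgroup (SpecialLinearGroup (Fin n) ℤ)}
    {F : (Fin n → ℝ) ≃ (Fin n → ℝ)} {A : GeneralLinearGroup (Fin n) ℤ}
    (hA : ∀ x m, F (x + castVec m) = F x + castVec ((A : Matrix (Fin n) (Fin n) ℤ) *ᵥ m))
    (hconj : ∀ γ ∈ Γ, ∃ β ∈ Γ, ∃ c, ∀ x,
      F (intMatAct (γ : Matrix (Fin n) (Fin n) ℤ) x) = intMatAct β (F x) + c)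
    (hconj_symm : ∀ γ ∈ Γ, ∃ β ∈ Γ, ∃ c, ∀ y,
      F.symm (intMatAct (γ : Matrix (Fin n) (Fin n) ℤ) y) = intMatAct β (F.symm y) + c)
    (g : Matrix (Fin n) (Fin n) ℤ) :
    (∃ γ ∈ Γ, (A : Matrix (Fin n) (Fin n) ℤ) * (γ : Matrix (Fin n) (Fin n) ℤ) *
        ((A⁻¹ : GeneralLinearGroup (Fin n) ℤ) : Matrix (Fin n) (Fin n) ℤ) = g) ↔
      ∃ γ ∈ Γ, (γ : Matrix (Fin n) (Fin n) ℤ) = g := by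
  have hA_symm : ∀ y m, F.symm (y + castVec m) =
      F.symm y + castVec (((A⁻¹ : GeneralLinearGroup (Fin n) ℤ) : Matrix _ _ ℤ) *ᵥ m) :=
    fun y m => F.injective <| by
      rw [F.apply_symm_apply, hA, F.apply_symm_apply, mulVec_mulVec, Units.mul_inv, one_mulVec]
  constructor
  · rintro ⟨γ, hγ, rfl⟩
    obtain ⟨β, hβ, c, hc⟩ := hconj γ hγ
    refine ⟨β, hβ, ?_⟩
    rw [mul_eq_mul_of_periodic hA hc, mul_assoc, Units.mul_inv, mul_one]
  · rintro ⟨γ, hγ, rfl⟩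
    obtain ⟨β, hβ, c, hc⟩ := hconj_symm γ hγ
    refine ⟨β, hβ, ?_⟩
    rw [mul_assoc, ← mul_eq_mul_of_periodic hA_symm hc, ← mul_assoc, Units.mul_inv, one_mul]

end

/-- **C¹ orbit equivalences of the standard torus action are affine.** Let `Γ` be a finite
index subgroup of `SL_n(ℤ)`, `n ≥ 2`, and let `F : ℝⁿ → ℝⁿ` be a bijection with `F` and
`F⁻¹` of class `C¹` and `F(x + m) - F(x) ∈ ℤⁿ` for all `x ∈ ℝⁿ`, `m ∈ ℤⁿ`. If the induced
torus map sends `Γ`-orbits onto `Γ`-orbits, i.e. for all `x, y ∈ ℝⁿ`,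
`(∃ γ ∈ Γ, ∃ m ∈ ℤⁿ, y = γx + m) ↔ (∃ γ ∈ Γ, ∃ m ∈ ℤⁿ, F(y) = γ F(x) + m)`,
then `F` is affine: there are `A ∈ GL_n(ℤ)` with `AΓA⁻¹ = Γ` and `c ∈ ℝⁿ` with
`F(x) = Ax + c` for all `x`. -/
theorem stmt5 (n : ℕ) (hn : 2 ≤ n)
    (Γ : Subgroup (Matrix.SpecialLinearGroup (Fin n) ℤ)) (hΓ : Γ.FiniteIndex)
    (F : (Fin n → ℝ) ≃ (Fin n → ℝ))
    (hF : ContDiff ℝ 1 F) (hFsymm : ContDiff ℝ 1 F.symm)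
    (hper : ∀ (x : Fin n → ℝ) (m : Fin n → ℤ),
      ∃ k : Fin n → ℤ, F (x + fun i => (m i : ℝ)) = F x + fun i => (k i : ℝ))
    (horb : ∀ x y : Fin n → ℝ,
      (∃ γ ∈ Γ, ∃ m : Fin n → ℤ,
          y = intMatAct (γ : Matrix (Fin n) (Fin n) ℤ) x + fun i => (m i : ℝ)) ↔
      (∃ γ ∈ Γ, ∃ m : Fin n → ℤ,
          F y = intMatAct (γ : Matrix (Fin n) (Fin n) ℤ) (F x) + fun i => (m i : ℝ))) :
    ∃ A : Matrix.GeneralLinearGroup (Fin n) ℤ,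
      (∀ g : Matrix (Fin n) (Fin n) ℤ,
        (∃ γ ∈ Γ, (A : Matrix (Fin n) (Fin n) ℤ) * (γ : Matrix (Fin n) (Fin n) ℤ) *
            ((A⁻¹ : Matrix.GeneralLinearGroup (Fin n) ℤ) : Matrix (Fin n) (Fin n) ℤ) = g) ↔
        (∃ γ ∈ Γ, (γ : Matrix (Fin n) (Fin n) ℤ) = g)) ∧
      ∃ c : Fin n → ℝ, ∀ x : Fin n → ℝ,
        F x = intMatAct (A : Matrix (Fin n) (Fin n) ℤ) x + c := by
  obtain ⟨B, hB⟩ := exists_intMatrix_of_periodic hF.continuous hper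
  have hconj : ∀ γ ∈ Γ, ∃ β ∈ Γ, ∃ c, ∀ x,
      F (intMatAct (γ : Matrix (Fin n) (Fin n) ℤ) x) = intMatAct β (F x) + c :=
    fun γ => exists_conj_of_mapsTo_orbits Γ F hF hFsymm
      fun x γ hγ => (horb x _).1 ⟨γ, hγ, 0, by simp [Pi.zero_def]⟩
  have hconj_symm : ∀ γ ∈ Γ, ∃ β ∈ Γ, ∃ c, ∀ y,
      F.symm (intMatAct (γ : Matrix (Fin n) (Fin n) ℤ) y) = intMatAct β (F.symm y) + c :=
    fun γ => exists_conj_of_mapsTo_orbits Γ F.symm hFsymm (by simpa using hF)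
      fun y γ hγ => (horb (F.symm y) _).2 ⟨γ, hγ, 0, by simp [Pi.zero_def]⟩
  have hFB := eq_intMatAct_add_of_conj hn hΓ hF.continuous F.injective hB fun γ hγ => by
    obtain ⟨β, -, hβ⟩ := hconj γ hγ
    exact ⟨β, hβ⟩
  have hBunit : IsUnit B := isUnit_of_eq_intMatAct_add F.surjective hFB fun y m hy => by
    have hy' : F y = intMatAct ((1 : SpecialLinearGroup (Fin n) ℤ) : Matrix _ _ ℤ) (F 0) +
        castVec m := by simpa using hy
    obtain ⟨γ, -, m', hm'⟩ := (horb 0 y).2 ⟨1, one_mem Γ, m, hy'⟩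
    exact ⟨m', by rw [hm', intMatAct_zero, zero_add]; rfl⟩
  exact ⟨hBunit.unit, conj_mem_iff_of_periodic hB hconj hconj_symm, F 0, hFB⟩
end

section
/- Let n ≥ 2 and equip the torus T^n = ℝⁿ/ℤⁿ with the quotient metric from the Euclidean metric on ℝⁿ. Let f be a homeomorphism of T^n which is Lipschitz and satisfies f(x) ∈ SL_n(ℤ)·x for all x ∈ T^n. Then there exist finitely many matrices γ_1, …, γ_k ∈ SL_n(ℤ) such that for every x ∈ T^n there is some i with f(x) = γ_i·x. -/
/-- The action induced on the torus `Tⁿ = ℝⁿ/ℤⁿ = (ℝ/ℤ)ⁿ` by an integer matrix `γ`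
(the map induced by the linear map `x ↦ γx` of `ℝⁿ`). -/
noncomputable def torusAct {n : ℕ} (γ : Matrix (Fin n) (Fin n) ℤ)
    (x : Fin n → AddCircle (1 : ℝ)) : Fin n → AddCircle (1 : ℝ) :=
  fun j => ∑ i, γ j i • x i

/-- The quotient metric on `Tⁿ = ℝⁿ/ℤⁿ` induced by the Euclidean metric on `ℝⁿ`:
`d([x],[y]) = inf {‖x - y + m‖ : m ∈ ℤⁿ}`; on `(ℝ/ℤ)ⁿ` it is given by
`√(∑ i ‖xᵢ - yᵢ‖²)`, where `‖·‖` is the quotient norm on `ℝ/ℤ`. -/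
noncomputable def torusDist {n : ℕ} (x y : Fin n → AddCircle (1 : ℝ)) : ℝ :=
  Real.sqrt (∑ i, ‖x i - y i‖ ^ 2)

lemma zsmul_coe' (m : ℤ) (t : ℝ) :
    m • ((t : ℝ) : AddCircle (1:ℝ)) = (((m : ℝ) * t : ℝ) : AddCircle (1:ℝ)) := by
  push_cast [← QuotientAddGroup.mk_zsmul]; norm_num

lemma norm_coe_small {t : ℝ} (h : |t| < 1/2) : ‖((t:ℝ) : AddCircle (1:ℝ))‖ = |t| := by
  rw [AddCircle.norm_eq]; rw [abs_lt] at h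
  rw [round_eq_zero_iff.mpr ⟨by linarith, by linarith⟩]; simp

lemma coord_le_torusDist {n : ℕ} (x y : Fin n → AddCircle (1:ℝ)) (j : Fin n) :
    ‖x j - y j‖ ≤ torusDist x y := by
  rw [torusDist, ← Real.sqrt_sq (norm_nonneg (x j - y j))]
  exact Real.sqrt_le_sqrt (Finset.single_le_sum (f := fun i => ‖x i - y i‖ ^ 2)
    (fun i _ => sq_nonneg _) (Finset.mem_univ j))

lemma continuous_torusAct {n : ℕ} (γ : Matrix (Fin n) (Fin n) ℤ) :
    Continuous (torusAct γ) :=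
  continuous_pi fun j => continuous_finset_sum _ fun i _ =>
    (continuous_zsmul (γ j i)).comp (continuous_apply i)

/-- Key quantitative lemma: entries of γ are bounded by K on interiors. -/
lemma entry_bound {n : ℕ}
    (f : (Fin n → AddCircle (1 : ℝ)) ≃ₜ (Fin n → AddCircle (1 : ℝ))) (K : ℝ)
    (hLip : ∀ x y, torusDist (f x) (f y) ≤ K * torusDist x y)
    (γ : Matrix (Fin n) (Fin n) ℤ) (x : Fin n → AddCircle (1:ℝ))
    (hx : x ∈ interior {y | f y = torusAct γ y}) (j i : Fin n) :
    ((|γ j i| : ℤ) : ℝ) ≤ K := by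
  set E : Set (Fin n → AddCircle (1:ℝ)) := {y | f y = torusAct γ y} with hE
  set a : ℤ := γ j i with ha
  set A : ℝ := |(a : ℝ)| with hA
  have hA0 : 0 ≤ A := abs_nonneg _
  -- the perturbation path
  set p : ℝ → (Fin n → AddCircle (1:ℝ)) :=
    fun t i' => x i' + if i' = i then ((t : ℝ) : AddCircle (1:ℝ)) else 0 with hp
  have hpc : Continuous p := by
    apply continuous_pi
    intro i'
    apply continuous_const.add
    split_ifs
    · exact continuous_quotient_mk'
    · exact continuous_const
  have hp0 : p 0 = x := by funext i'; simp [hp]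
  have hmem : E ∈ nhds x := mem_interior_iff_mem_nhds.mp hx
  have hnh : p ⁻¹' E ∈ nhds (0 : ℝ) := by
    have := hpc.continuousAt (x := (0:ℝ))
    rw [← hp0] at hmem
    exact this.preimage_mem_nhds hmem
  obtain ⟨δ, hδ0, hδ⟩ := Metric.mem_nhds_iff.mp hnh
  -- choice of t
  set t : ℝ := min (δ/2) (1/(3*(A+1))) with htdef
  have ht0 : 0 < t := lt_min (by linarith) (by positivity)
  have ht3 : t ≤ 1/(3*(A+1)) := min_le_right _ _
  have h3A : (1:ℝ)/(3*(A+1)) ≤ 1/3 := by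
    apply one_div_le_one_div_of_le <;> linarith
  have htsmall : |t| < 1/2 := by
    rw [abs_of_pos ht0]; linarith
  have hAt : |(a:ℝ) * t| < 1/2 := by
    rw [abs_mul, abs_of_pos ht0, ← hA]
    have h1 : A * t ≤ A * (1/(3*(A+1))) := mul_le_mul_of_nonneg_left ht3 hA0
    have h2 : A * (1/(3*(A+1))) < 1/2 := by
      rw [mul_one_div, div_lt_iff₀ (by positivity)]
      linarith
    linarith
  -- p t ∈ E, x ∈ E
  have hptE : p t ∈ E := by
    apply hδ
    rw [Metric.mem_ball, Real.dist_eq, sub_zero, abs_of_pos ht0]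
    calc t ≤ δ/2 := min_le_left _ _
    _ < δ := by linarith
  have hxE : x ∈ E := interior_subset hx
  -- coordinate differences
  have hsub : ∀ i', p t i' - x i' =
      if i' = i then ((t : ℝ) : AddCircle (1:ℝ)) else 0 := by
    intro i'; simp [hp, add_sub_cancel_left]
  -- distance p t to x
  have hd1 : torusDist (p t) x = t := by
    rw [torusDist]
    have : ∀ i', ‖p t i' - x i'‖ ^ 2 =
        if i' = i then ‖((t:ℝ) : AddCircle (1:ℝ))‖^2 else 0 := by
      intro i'; rw [hsub i']; split_ifs <;> simp
    rw [Finset.sum_congr rfl (fun i' _ => this i'), Finset.sum_ite_eq' Finset.univ i,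
      if_pos (Finset.mem_univ i), Real.sqrt_sq (norm_nonneg _), norm_coe_small htsmall,
      abs_of_pos ht0]
  -- difference at coordinate j
  have hdiff : f (p t) j - f x j = (((a:ℝ) * t : ℝ) : AddCircle (1:ℝ)) := by
    rw [hptE, hxE]
    show (∑ i', γ j i' • p t i') - ∑ i', γ j i' • x i' = _
    rw [← Finset.sum_sub_distrib]
    have : ∀ i', γ j i' • p t i' - γ j i' • x i' =
        if i' = i then (((a:ℝ) * t : ℝ) : AddCircle (1:ℝ)) else 0 := by
      intro i'
      rw [← smul_sub, hsub i']
      split_ifs with h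
      · subst h; rw [zsmul_coe']
      · simp
    rw [Finset.sum_congr rfl (fun i' _ => this i'), Finset.sum_ite_eq' Finset.univ i,
      if_pos (Finset.mem_univ i)]
  -- conclude
  have hb : A * t ≤ K * t := by
    have h1 : ‖f (p t) j - f x j‖ ≤ torusDist (f (p t)) (f x) :=
      coord_le_torusDist _ _ j
    rw [hdiff, norm_coe_small hAt, abs_mul, abs_of_pos ht0, ← hA] at h1
    calc A * t ≤ torusDist (f (p t)) (f x) := h1
    _ ≤ K * torusDist (p t) x := hLip _ _
    _ = K * t := by rw [hd1]
  have : A ≤ K := le_of_mul_le_mul_right (by linarith [hb]) ht0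
  calc ((|a| : ℤ) : ℝ) = A := by rw [hA, Int.cast_abs]
  _ ≤ K := this

/-- **Lipschitz orbit equivalences are piecewise linear.** Every Lipschitz homeomorphism
of the torus `Tⁿ` (`n ≥ 2`, with the quotient of the Euclidean metric) preserving each
`SL_n(ℤ)`-orbit agrees pointwise with finitely many elements `γ₁, …, γ_k` of
`SL_n(ℤ)`. -/
theorem stmt9 (n : ℕ) (hn : 2 ≤ n)
    (f : (Fin n → AddCircle (1 : ℝ)) ≃ₜ (Fin n → AddCircle (1 : ℝ)))
    (K : ℝ)
    (hLip : ∀ x y : Fin n → AddCircle (1 : ℝ), torusDist (f x) (f y) ≤ K * torusDist x y)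
    (hf : ∀ x : Fin n → AddCircle (1 : ℝ),
      ∃ γ : Matrix.SpecialLinearGroup (Fin n) ℤ,
        f x = torusAct (γ : Matrix (Fin n) (Fin n) ℤ) x) :
    ∃ S : Finset (Matrix.SpecialLinearGroup (Fin n) ℤ),
      ∀ x : Fin n → AddCircle (1 : ℝ),
        ∃ γ ∈ S, f x = torusAct (γ : Matrix (Fin n) (Fin n) ℤ) x := by
  haveI : Countable (Matrix (Fin n) (Fin n) ℤ) :=
    inferInstanceAs (Countable (Fin n → Fin n → ℤ))
  haveI : Countable (Matrix.SpecialLinearGroup (Fin n) ℤ) := Subtype.countable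
  set E : Matrix.SpecialLinearGroup (Fin n) ℤ → Set (Fin n → AddCircle (1:ℝ)) :=
    fun γ => {y | f y = torusAct (γ : Matrix (Fin n) (Fin n) ℤ) y} with hEdef
  have hEclosed : ∀ γ, IsClosed (E γ) :=
    fun γ => isClosed_eq f.continuous (continuous_torusAct _)
  have hcover : ⋃ γ, E γ = Set.univ := by
    apply Set.eq_univ_of_forall
    intro x
    obtain ⟨γ, hγ⟩ := hf x
    exact Set.mem_iUnion.mpr ⟨γ, hγ⟩
  have hdense : Dense (⋃ γ, interior (E γ)) :=
    dense_iUnion_interior_of_closed hEclosed hcover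
  -- the finite set of candidate matrices
  set Sset : Set (Matrix.SpecialLinearGroup (Fin n) ℤ) :=
    {γ | ∀ j i, |(γ : Matrix (Fin n) (Fin n) ℤ) j i| ≤ ⌊K⌋} with hSset
  have hSfin : Sset.Finite := by
    have hmat : {A : Matrix (Fin n) (Fin n) ℤ | ∀ j i, |A j i| ≤ ⌊K⌋}.Finite := by
      have h : {A : Matrix (Fin n) (Fin n) ℤ | ∀ j i, |A j i| ≤ ⌊K⌋} ⊆
          Set.pi Set.univ (fun _ : Fin n =>
            Set.pi Set.univ (fun _ : Fin n => Set.Icc (-⌊K⌋) ⌊K⌋)) := by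
        intro A hA j _
        intro i _
        exact abs_le.mp (hA j i)
      exact (Set.Finite.pi (fun _ => Set.Finite.pi fun _ => Set.finite_Icc _ _)).subset h
    have : Sset ⊆ (fun γ : Matrix.SpecialLinearGroup (Fin n) ℤ =>
        (γ : Matrix (Fin n) (Fin n) ℤ)) ⁻¹' {A | ∀ j i, |A j i| ≤ ⌊K⌋} := fun γ hγ => hγ
    exact ((hmat.preimage (Set.injOn_of_injective Subtype.coe_injective))).subset this
  refine ⟨hSfin.toFinset, ?_⟩
  -- the closed finite union
  set C : Set (Fin n → AddCircle (1:ℝ)) := ⋃ γ ∈ Sset, E γ with hC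
  have hCclosed : IsClosed C := hSfin.isClosed_biUnion (fun γ _ => hEclosed γ)
  have hsub : (⋃ γ, interior (E γ)) ⊆ C := by
    intro x hx
    obtain ⟨γ, hγ⟩ := Set.mem_iUnion.mp hx
    have hγS : γ ∈ Sset := by
      intro j i
      exact Int.le_floor.mpr (entry_bound f K hLip _ x hγ j i)
    exact Set.mem_biUnion hγS (interior_subset hγ)
  have hCuniv : C = Set.univ := by
    have := closure_mono hsub
    rw [hdense.closure_eq, hCclosed.closure_eq] at this
    exact Set.eq_univ_of_univ_subset this
  intro x
  have hxC : x ∈ C := hCuniv ▸ Set.mem_univ x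
  obtain ⟨γ, hγS, hγx⟩ := Set.mem_iUnion₂.mp hxC
  exact ⟨γ, hSfin.mem_toFinset.mpr hγS, hγx⟩
end
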